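/- arXiv:0902.0657 — 9 statements merged into one kernel-verified Lean document; each statement's English description precedes it below -/
import Mathlib

section
/- Let S be a finite nonempty index set. The set of points u ∈ [0,1]^S that satisfy, for every subset V ⊆ S of odd cardinality, the inequality Σ_{i∈V} u_i − Σ_{i∈S∖V} u_i ≤ |V| − 1, is exactly the convex hull of the set of binary vectors x ∈ {0,1}^S whose coordinate sum Σ_{i∈S} x_i is even. -/
/-!
The parity polytope is convex and contains the even-weight vectors: for an odd `V` and an
even-weight `x`, the slack `∑_{i∈V} (1 - x_i) + ∑_{i∉V} x_i` counts the odd set `V ∆ supp x`. For the converse it suffices, by Hahn–Banach, to dominate every linear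
functional `c` on the parity polytope by its value at some even-weight vertex. Let `P = {i | c_i > 0}`.
If `|P|` is even, `1_P` already maximizes `c` over the whole cube. If `|P|` is odd, let `t`
minimize `|c_t|`; then the parity inequality for `V = P` gives `c ⬝ u ≤ ∑_P c - |c_t|`, which is
the value of `c` at the even vertex `1_{P ∆ {t}}`.
-/

open Finset

variable {ι : Type*}

def parityPolytope (ι : Type*) [Fintype ι] [DecidableEq ι] : Set (ι → ℝ) :=
  {u | (∀ i, 0 ≤ u i ∧ u i ≤ 1) ∧
    ∀ V : Finset ι, Odd V.card → ∑ i ∈ V, u i - ∑ i ∈ Vᶜ, u i ≤ (V.card : ℝ) - 1}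

def evenBinaryVectors (ι : Type*) [Fintype ι] : Set (ι → ℝ) :=
  {x | (∀ i, x i = 0 ∨ x i = 1) ∧ Even (univ.filter (fun i => x i = 1)).card}

lemma sum_mul_indicator_one [DecidableEq ι] (s B : Finset ι) (c : ι → ℝ) :
    ∑ i ∈ s, c i * (B : Set ι).indicator (1 : ι → ℝ) i = ∑ i ∈ s ∩ B, c i := by
  simp [Set.indicator_apply, sum_ite_mem]

lemma sum_indicator_one [DecidableEq ι] (s B : Finset ι) :
    ∑ i ∈ s, (B : Set ι).indicator (1 : ι → ℝ) i = (s ∩ B).card := by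
  simp [Set.indicator_apply]

lemma evenBinaryVectors_eq_image [Fintype ι] :
    evenBinaryVectors ι = (fun B : Finset ι => (B : Set ι).indicator 1) '' {B | Even B.card} := by
  ext x
  constructor
  · rintro ⟨hx, hev⟩
    refine ⟨_, hev, funext fun i => ?_⟩
    rcases hx i with h | h <;> simp [h]
  · rintro ⟨B, hB, rfl⟩
    refine ⟨fun i => ?_, ?_⟩
    · by_cases h : i ∈ B <;> simp [h]
    · simp only [Set.mem_ofPred_eq] at hB ⊢
      convert hB using 2
      ext i
      by_cases h : i ∈ B <;> simp [h]

lemma finite_evenBinaryVectors [Fintype ι] : (evenBinaryVectors ι).Finite := by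
  rw [evenBinaryVectors_eq_image]
  exact (Set.toFinite _).image _

section Fintype

variable [Fintype ι] [DecidableEq ι]

def paritySlack (V : Finset ι) (u : ι → ℝ) : ℝ :=
  ∑ i ∈ V, (1 - u i) + ∑ i ∈ Vᶜ, u i

lemma sub_le_card_sub_one_iff_one_le_paritySlack (V : Finset ι) (u : ι → ℝ) :
    ∑ i ∈ V, u i - ∑ i ∈ Vᶜ, u i ≤ (V.card : ℝ) - 1 ↔ 1 ≤ paritySlack V u := by
  rw [paritySlack, sum_sub_distrib, sum_const, nsmul_one]
  constructor <;> intro h <;> linarith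

lemma paritySlack_indicator (V B : Finset ι) :
    paritySlack V ((B : Set ι).indicator 1) = (V \ B).card + (B \ V).card := by
  rw [paritySlack, sum_sub_distrib, sum_indicator_one, sum_indicator_one, sum_const, nsmul_one,
    ← card_sdiff_add_card_inter V B, inter_comm Vᶜ, ← sdiff_eq_inter_compl]
  push_cast
  ring

lemma one_le_paritySlack_indicator {V B : Finset ι} (hV : Odd V.card) (hB : Even B.card) :
    1 ≤ paritySlack V ((B : Set ι).indicator 1) := by
  rw [paritySlack_indicator]
  norm_cast
  have hV' := card_sdiff_add_card_inter V B
  have hB' := card_sdiff_add_card_inter B V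
  rw [inter_comm] at hB'
  obtain ⟨k, hk⟩ := hV
  obtain ⟨l, hl⟩ := hB
  omega

lemma convex_parityPolytope : Convex ℝ (parityPolytope ι) := by
  rintro x ⟨hx01, hxV⟩ y ⟨hy01, hyV⟩ a b ha hb hab
  refine ⟨fun i => ?_, fun V hV => ?_⟩
  · simp only [Pi.add_apply, Pi.smul_apply, smul_eq_mul]
    constructor <;> nlinarith [hx01 i, hy01 i]
  · have hx := hxV V hV
    have hy := hyV V hV
    simp only [Pi.add_apply, Pi.smul_apply, smul_eq_mul, sum_add_distrib, ← mul_sum]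
    nlinarith

lemma evenBinaryVectors_subset_parityPolytope : evenBinaryVectors ι ⊆ parityPolytope ι := by
  rw [evenBinaryVectors_eq_image]
  rintro _ ⟨B, hB, rfl⟩
  refine ⟨fun i => ?_, fun V hV => ?_⟩
  · by_cases h : i ∈ B <;> simp [h]
  · rw [sub_le_card_sub_one_iff_one_le_paritySlack]
    exact one_le_paritySlack_indicator hV hB

lemma sum_mul_le_sub_mul_paritySlack {c u : ι → ℝ} (hu : ∀ i, 0 ≤ u i ∧ u i ≤ 1)
    {P : Finset ι} {m : ℝ} (hP : ∀ i ∈ P, m ≤ c i) (hPc : ∀ i ∉ P, c i ≤ -m) :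
    ∑ i, c i * u i ≤ ∑ i ∈ P, c i - m * paritySlack P u :=
  calc ∑ i, c i * u i = ∑ i ∈ P, c i * u i + ∑ i ∈ Pᶜ, c i * u i := (sum_add_sum_compl P _).symm
    _ ≤ ∑ i ∈ P, (c i - m * (1 - u i)) + ∑ i ∈ Pᶜ, -(m * u i) := by
      gcongr with i hi i hi
      · nlinarith [hP i hi, hu i]
      · nlinarith [hPc i (mem_compl.1 hi), hu i]
    _ = ∑ i ∈ P, c i - m * paritySlack P u := by
      rw [paritySlack, mul_add, mul_sum, mul_sum, sum_sub_distrib, sum_neg_distrib]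
      ring

lemma exists_even_card_sum_ge (c : ι → ℝ) {u : ι → ℝ} (hu : ∀ i, 0 ≤ u i ∧ u i ≤ 1)
    (hpar : ∀ V : Finset ι, Odd V.card → 1 ≤ paritySlack V u) :
    ∃ B : Finset ι, Even B.card ∧ ∑ i, c i * u i ≤ ∑ i ∈ B, c i := by
  set P := univ.filter (fun i => 0 < c i)
  have hP : ∀ i ∈ P, 0 < c i := fun i hi => (mem_filter.1 hi).2
  have hPc : ∀ i ∉ P, c i ≤ 0 := fun i hi => not_lt.1 fun h => hi (by simp [P, h])
  rcases Nat.even_or_odd P.card with hPev | hPodd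
  · refine ⟨P, hPev, ?_⟩
    simpa using sum_mul_le_sub_mul_paritySlack hu (m := 0) (fun i hi => (hP i hi).le)
      (fun i hi => by simpa using hPc i hi)
  obtain ⟨s, -⟩ : P.Nonempty := card_pos.1 hPodd.pos
  obtain ⟨t, -, ht⟩ := exists_min_image univ (fun i => |c i|) ⟨s, mem_univ s⟩
  have hbound : ∑ i, c i * u i ≤ ∑ i ∈ P, c i - |c t| := by
    have := sum_mul_le_sub_mul_paritySlack hu (m := |c t|)
      (fun i hi => (ht i (mem_univ i)).trans (abs_of_pos (hP i hi)).le)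
      (fun i hi => by have := ht i (mem_univ i); rw [abs_of_nonpos (hPc i hi)] at this; linarith)
    nlinarith [hpar P hPodd, abs_nonneg (c t)]
  by_cases htP : t ∈ P
  · refine ⟨P.erase t, ?_, ?_⟩
    · rw [card_erase_of_mem htP]
      exact Nat.Odd.sub_odd hPodd odd_one
    · rwa [sum_erase_eq_sub htP, ← abs_of_pos (hP t htP)]
  · refine ⟨insert t P, ?_, ?_⟩
    · rw [card_insert_of_notMem htP]
      exact hPodd.add_one
    · rw [sum_insert htP, abs_of_nonpos (hPc t htP)] at *
      linarith

end Fintype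

theorem stmt_0_general (ι : Type) [Fintype ι] [DecidableEq ι] :
    {u : ι → ℝ | (∀ i, 0 ≤ u i ∧ u i ≤ 1) ∧
      ∀ V : Finset ι, Odd V.card →
        ∑ i ∈ V, u i - ∑ i ∈ Vᶜ, u i ≤ (V.card : ℝ) - 1} =
    convexHull ℝ {x : ι → ℝ | (∀ i, x i = 0 ∨ x i = 1) ∧
      Even (Finset.univ.filter (fun i => x i = 1)).card} := by
  change parityPolytope ι = convexHull ℝ (evenBinaryVectors ι)
  refine (convexHull_min evenBinaryVectors_subset_parityPolytope convex_parityPolytope).antisymm'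
    fun u hu => ?_
  rw [← iInter_halfSpaces_eq (convex_convexHull ℝ _)
    (finite_evenBinaryVectors.isClosed_convexHull ℝ)]
  refine Set.mem_iInter.2 fun l => ?_
  set c : ι → ℝ := fun i => l fun j => if i = j then 1 else 0
  have hl : ∀ x, l x = ∑ i, c i * x i := fun x =>
    (l.toLinearMap.pi_apply_eq_sum_univ x).trans (sum_congr rfl fun i _ => mul_comm _ _)
  obtain ⟨B, hB, hle⟩ := exists_even_card_sum_ge c hu.1
    fun V hV => (sub_le_card_sub_one_iff_one_le_paritySlack V u).1 (hu.2 V hV)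
  refine ⟨(B : Set ι).indicator 1, subset_convexHull ℝ _ ?_, ?_⟩
  · rw [evenBinaryVectors_eq_image]
    exact ⟨B, hB, rfl⟩
  · rwa [hl, hl, sum_mul_indicator_one, univ_inter]

/-- For a finite nonempty index set, the set of points `u ∈ [0,1]^S`
satisfying every odd-cardinality parity inequality
`∑_{i∈V} u_i - ∑_{i∈S∖V} u_i ≤ |V| - 1` is exactly the convex hull of the
even-weight binary vectors. -/
theorem stmt_0 (ι : Type) [Fintype ι] [DecidableEq ι] [Nonempty ι] :
    {u : ι → ℝ | (∀ i, 0 ≤ u i ∧ u i ≤ 1) ∧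
      ∀ V : Finset ι, Odd V.card →
        ∑ i ∈ V, u i - ∑ i ∈ Vᶜ, u i ≤ (V.card : ℝ) - 1} =
    convexHull ℝ {x : ι → ℝ | (∀ i, x i = 0 ∨ x i = 1) ∧
      Even (Finset.univ.filter (fun i => x i = 1)).card} :=
  stmt_0_general ι
end

section
/- Let H ∈ {0,1}^{m×n} and let j be a row index with support N(j). A binary vector u ∈ {0,1}^n satisfies the parity inequality associated with (j,V) for every odd-cardinality subset V ⊆ N(j) if and only if Σ_{i∈N(j)} u_i is even. -/
/-- Support of row `j` of a binary matrix `H`. -/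
def supp {m n : ℕ} (H : Fin m → Fin n → Bool) (j : Fin m) : Finset (Fin n) :=
  Finset.univ.filter (fun i => H j i)

/-- Left-hand side of the parity inequality associated with `(j, V)` at `u`. -/
def LHS {m n : ℕ} (H : Fin m → Fin n → Bool) (j : Fin m) (V : Finset (Fin n))
    (u : Fin n → ℝ) : ℝ :=
  ∑ i ∈ V, (1 - u i) + ∑ i ∈ supp H j \ V, u i

/-!
If `u` is binary and `T` is the set of its ones on `N(j)`, then for `V ⊆ N(j)` the left-hand
side of the parity inequality counts `|V \ T| + |T \ V|`, a number with the parity of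
`|V| + |T|`. So when `|T|` is odd the inequality for `V = T` is violated, and when `|T|` is even
every odd `V` gives an odd, hence positive, left-hand side.
-/

open Finset

theorem Finset.odd_card_sdiff_add_card_sdiff_iff {α : Type*} [DecidableEq α] (s t : Finset α) :
    Odd (#(s \ t) + #(t \ s)) ↔ Odd (#s + #t) := by
  rw [← card_sdiff_add_card_inter s t, ← card_sdiff_add_card_inter t s, inter_comm t s,
    add_add_add_comm, ← two_mul]
  simp [Nat.odd_add]

theorem Finset.sum_eq_card_filter_eq_one_of_binary {ι : Type*} {A : Finset ι} {u : ι → ℝ}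
    (hu : ∀ i ∈ A, u i = 0 ∨ u i = 1) : ∑ i ∈ A, u i = #(A.filter (u · = 1)) := by
  rw [card_filter, Nat.cast_sum]
  refine sum_congr rfl fun i hi => ?_
  rcases hu i hi with h | h <;> simp [h]

theorem Finset.sum_one_sub_eq_card_filter_ne_one_of_binary {ι : Type*} {A : Finset ι}
    {u : ι → ℝ} (hu : ∀ i ∈ A, u i = 0 ∨ u i = 1) :
    ∑ i ∈ A, (1 - u i) = #(A.filter (u · ≠ 1)) := by
  rw [card_filter, Nat.cast_sum]
  refine sum_congr rfl fun i hi => ?_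
  rcases hu i hi with h | h <;> simp [h]

theorem LHS_eq_card_sdiff_add_card_sdiff {m n : ℕ} {H : Fin m → Fin n → Bool} {j : Fin m}
    {V : Finset (Fin n)} {u : Fin n → ℝ} (hu : ∀ i, u i = 0 ∨ u i = 1) (hV : V ⊆ supp H j) :
    LHS H j V u =
      (#(V \ (supp H j).filter (u · = 1)) + #((supp H j).filter (u · = 1) \ V) : ℕ) := by
  have hV' : V.filter (u · ≠ 1) = V \ (supp H j).filter (u · = 1) := by
    ext i
    have hVi := @hV i
    simp only [mem_filter, mem_sdiff]
    tauto
  have hS : (supp H j \ V).filter (u · = 1) = (supp H j).filter (u · = 1) \ V := by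
    ext i
    simp only [mem_filter, mem_sdiff]
    tauto
  rw [LHS, sum_one_sub_eq_card_filter_ne_one_of_binary fun i _ => hu i,
    sum_eq_card_filter_eq_one_of_binary fun i _ => hu i, hV', hS, Nat.cast_add]

/-- a binary vector `u` satisfies all parity inequalities of row `j`
iff the number of ones of `u` on the support of row `j` is even. -/
theorem stmt_1 (m n : ℕ) (H : Fin m → Fin n → Bool) (j : Fin m)
    (u : Fin n → ℝ) (hu : ∀ i, u i = 0 ∨ u i = 1) :
    (∀ V : Finset (Fin n), V ⊆ supp H j → Odd V.card → 1 ≤ LHS H j V u) ↔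
      Even ((supp H j).filter (fun i => u i = 1)).card := by
  set T := (supp H j).filter (fun i => u i = 1)
  have hT : T ⊆ supp H j := filter_subset _ _
  constructor
  · intro hall
    by_contra hodd
    have h := hall T hT (Nat.not_even_iff_odd.mp hodd)
    rw [LHS_eq_card_sdiff_add_card_sdiff hu hT, Finset.sdiff_self, card_empty] at h
    norm_num at h
  · intro heven V hV hodd
    have hpos := ((odd_card_sdiff_add_card_sdiff_iff V T).mpr (hodd.add_even heven)).pos
    rw [LHS_eq_card_sdiff_add_card_sdiff hu hV]
    exact_mod_cast hpos
end

section
/- Let H ∈ {0,1}^{m×n}, let j be a row index, and let u ∈ [0,1]^n. If for some odd-cardinality subset V ⊆ N(j) the parity inequality associated with (j,V) is violated at u (i.e., LHS_{j,V}(u) < 1), then for every other odd-cardinality subset V' ⊆ N(j) with V' ≠ V, the parity inequality associated with (j,V') is satisfied with strict inequality at u (i.e., LHS_{j,V'}(u) > 1). -/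
open Finset
open scoped symmDiff

theorem Finset.card_symmDiff_add_two_mul_card_inter {α : Type*} [DecidableEq α]
    (s t : Finset α) : #(s ∆ t) + 2 * #(s ∩ t) = #s + #t := by
  rw [symmDiff_def, sup_eq_union, card_union_of_disjoint disjoint_sdiff_sdiff,
    ← card_sdiff_add_card_inter s t, ← card_sdiff_add_card_inter t s, inter_comm t s]
  ring

theorem Finset.two_le_card_symmDiff_of_odd {α : Type*} [DecidableEq α] {s t : Finset α}
    (hs : Odd #s) (ht : Odd #t) (hst : s ≠ t) : 2 ≤ #(s ∆ t) := by
  have hpos : 0 < #(s ∆ t) := card_pos.mpr (symmDiff_nonempty.mpr hst)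
  have hsum := card_symmDiff_add_two_mul_card_inter s t
  rcases hs with ⟨a, ha⟩
  rcases ht with ⟨b, hb⟩
  omega

section ParityInequality

variable {m n : ℕ} (H : Fin m → Fin n → Bool) (j : Fin m) (u : Fin n → ℝ)

theorem LHS_eq_sum_ite {V : Finset (Fin n)} (hV : V ⊆ supp H j) :
    LHS H j V u = ∑ i ∈ supp H j, if i ∈ V then 1 - u i else u i := by
  rw [sum_ite, filter_mem_eq_inter, inter_eq_right.mpr hV, ← sdiff_eq_filter, LHS]

theorem card_symmDiff_le_LHS_add_LHS (hu : ∀ i, 0 ≤ u i ∧ u i ≤ 1) {V V' : Finset (Fin n)}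
    (hV : V ⊆ supp H j) (hV' : V' ⊆ supp H j) :
    (#(V ∆ V') : ℝ) ≤ LHS H j V u + LHS H j V' u := by
  set term : Finset (Fin n) → Fin n → ℝ := fun W i => if i ∈ W then 1 - u i else u i
  have term_nonneg (W : Finset (Fin n)) (i : Fin n) : 0 ≤ term W i := by
    simp only [term]
    split_ifs <;> linarith [hu i]
  have term_add_term_of_mem (i : Fin n) (hi : i ∈ V ∆ V') : term V i + term V' i = 1 := by
    rcases mem_symmDiff.mp hi with ⟨hiV, hiV'⟩ | ⟨hiV', hiV⟩ <;> simp [term, hiV, hiV']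
  rw [LHS_eq_sum_ite H j u hV, LHS_eq_sum_ite H j u hV', ← sum_add_distrib, card_eq_sum_ones,
    Nat.cast_sum, Nat.cast_one]
  calc ∑ i ∈ V ∆ V', (1 : ℝ) = ∑ i ∈ V ∆ V', (term V i + term V' i) :=
        (sum_congr rfl term_add_term_of_mem).symm
    _ ≤ ∑ i ∈ supp H j, (term V i + term V' i) :=
        sum_le_sum_of_subset_of_nonneg (symmDiff_subset_union.trans (union_subset hV hV'))
          fun i _ _ => add_nonneg (term_nonneg V i) (term_nonneg V' i)

end ParityInequality

/-- if one parity inequality of row `j` is violated at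
`u ∈ [0,1]^n`, every other parity inequality of row `j` is satisfied with
strict inequality at `u`. -/
theorem stmt_3 (m n : ℕ) (H : Fin m → Fin n → Bool) (j : Fin m)
    (u : Fin n → ℝ) (hu : ∀ i, 0 ≤ u i ∧ u i ≤ 1)
    (V : Finset (Fin n)) (hVsub : V ⊆ supp H j) (hVodd : Odd V.card)
    (hviol : LHS H j V u < 1) :
    ∀ V' : Finset (Fin n), V' ⊆ supp H j → Odd V'.card → V' ≠ V →
      1 < LHS H j V' u := by
  intro V' hV'sub hV'odd hne
  have htwo : (2 : ℝ) ≤ #(V ∆ V') := by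
    exact_mod_cast two_le_card_symmDiff_of_odd hVodd hV'odd hne.symm
  linarith [card_symmDiff_le_LHS_add_LHS H j u hu hVsub hV'sub]
end

section
/- Let H ∈ {0,1}^{m×n} and u ∈ [0,1]^n. For each row index j, at most one pair (j,V) with V ⊆ N(j) of odd cardinality has its parity inequality violated at u. Consequently, the total number of parity inequalities of H that are violated at u is at most m. -/
open Finset

namespace Finset

theorem two_le_card_sdiff_add_card_sdiff_of_odd {ι : Type*} [DecidableEq ι] {V W : Finset ι}
    (hVW : V ≠ W) (hV : Odd #V) (hW : Odd #W) : 2 ≤ #(V \ W) + #(W \ V) := by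
  have hVsplit := card_sdiff_add_card_inter V W
  have hWsplit := card_sdiff_add_card_inter W V
  rw [inter_comm] at hWsplit
  have hpos : 0 < #(V \ W) + #(W \ V) := by
    by_contra! h
    refine hVW (Subset.antisymm ?_ ?_) <;>
      exact sdiff_eq_empty_iff_subset.mp (card_eq_zero.mp (by omega))
  obtain ⟨a, ha⟩ := hV
  obtain ⟨b, hb⟩ := hW
  omega

end Finset

section ParityInequality

variable {ι : Type*} [DecidableEq ι] {S V W : Finset ι} {u : ι → ℝ}

def parityLhs (S V : Finset ι) (u : ι → ℝ) : ℝ :=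
  ∑ i ∈ V, (1 - u i) + ∑ i ∈ S \ V, u i

theorem sum_sdiff_le_parityLhs (hu : ∀ i ∈ S, 0 ≤ u i ∧ u i ≤ 1) (hV : V ⊆ S) (hW : W ⊆ S) :
    ∑ i ∈ V \ W, (1 - u i) + ∑ i ∈ W \ V, u i ≤ parityLhs S V u := by
  apply add_le_add
  · exact sum_le_sum_of_subset_of_nonneg sdiff_subset
      fun i hi _ => sub_nonneg.mpr (hu i (hV hi)).2
  · exact sum_le_sum_of_subset_of_nonneg (sdiff_subset_sdiff hW Subset.rfl)
      fun i hi _ => (hu i (mem_sdiff.mp hi).1).1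

theorem card_sdiff_add_card_sdiff_le_parityLhs_add (hu : ∀ i ∈ S, 0 ≤ u i ∧ u i ≤ 1)
    (hV : V ⊆ S) (hW : W ⊆ S) :
    (#(V \ W) + #(W \ V) : ℝ) ≤ parityLhs S V u + parityLhs S W u := by
  have hcard (T : Finset ι) : ∑ i ∈ T, (1 - u i) + ∑ i ∈ T, u i = #T := by
    simp
  linarith [hcard (V \ W), hcard (W \ V), sum_sdiff_le_parityLhs hu hV hW,
    sum_sdiff_le_parityLhs hu hW hV]

theorem eq_of_parityLhs_lt_one (hu : ∀ i ∈ S, 0 ≤ u i ∧ u i ≤ 1)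
    (hV : V ⊆ S) (hW : W ⊆ S) (hVodd : Odd #V) (hWodd : Odd #W)
    (hVlt : parityLhs S V u < 1) (hWlt : parityLhs S W u < 1) : V = W := by
  by_contra hVW
  have hcard : (2 : ℝ) ≤ #(V \ W) + #(W \ V) := by
    exact_mod_cast two_le_card_sdiff_add_card_sdiff_of_odd hVW hVodd hWodd
  linarith [card_sdiff_add_card_sdiff_le_parityLhs_add hu hV hW]

theorem card_filter_parityLhs_lt_one_le_one (hu : ∀ i ∈ S, 0 ≤ u i ∧ u i ≤ 1) :
    #(S.powerset.filter fun V => Odd #V ∧ parityLhs S V u < 1) ≤ 1 := by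
  refine card_le_one.mpr fun V hV W hW => ?_
  simp only [mem_filter, mem_powerset] at hV hW
  exact eq_of_parityLhs_lt_one hu hV.1 hW.1 hV.2.1 hW.2.1 hV.2.2 hW.2.2

end ParityInequality

/-- for `u ∈ [0,1]^n`, each row `j` has at most one violated
parity inequality, and hence the total number of parity inequalities of `H`
violated at `u` is at most `m`. -/
theorem stmt_4 (m n : ℕ) (H : Fin m → Fin n → Bool)
    (u : Fin n → ℝ) (hu : ∀ i, 0 ≤ u i ∧ u i ≤ 1) :
    (∀ j : Fin m,
      ((supp H j).powerset.filter
        (fun V => Odd V.card ∧ LHS H j V u < 1)).card ≤ 1) ∧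
    ∑ j : Fin m, ((supp H j).powerset.filter
        (fun V => Odd V.card ∧ LHS H j V u < 1)).card ≤ m := by
  have hrow (j : Fin m) :
      #((supp H j).powerset.filter fun V => Odd #V ∧ LHS H j V u < 1) ≤ 1 :=
    card_filter_parityLhs_lt_one_le_one fun i _ => hu i
  refine ⟨hrow, ?_⟩
  simpa using sum_le_card_nsmul univ _ 1 fun j _ => hrow j
end

section
/- Let H ∈ {0,1}^{m×n}, let j be a row index with N(j) nonempty, and let u ∈ [0,1]^n. Define S = {i ∈ N(j) : u_i > 1/2}. If |S| is odd, set V = S; otherwise let i* be any element of N(j) minimizing |u_i − 1/2| over i ∈ N(j), and set V = S ∖ {i*} if i* ∈ S and V = S ∪ {i*} if i* ∉ S. Then V has odd cardinality, and for every odd-cardinality subset V' ⊆ N(j) one has LHS_{j,V}(u) ≤ LHS_{j,V'}(u). In particular, some parity inequality of row j is violated at u if and only if LHS_{j,V}(u) < 1. -/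
/-!
With `c i = 1 - 2 u_i` one has `LHS_{j,W}(u) = ∑_{i ∈ N(j)} u_i + ∑_{i ∈ W} c_i`, so the task is to
minimize `∑_{W} c` over odd `W ⊆ N(j)`. The set `S` collects exactly the negative weights, hence
`∑_W c = ∑_S c + ∑_{W ∆ S} |c|`. If `|S|` is odd, `S` itself is optimal. If `|S|` is even, every
odd `W` differs from `S`, so `W ∆ S` contains some element whose `|c|` is at least `|c_{i*}|`,
which is exactly the cost of flipping `i*`.
-/

open Finset
open scoped symmDiff

section OddSubsetMinimization

variable {ι : Type*} [DecidableEq ι]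

def makeOdd (S : Finset ι) (i₀ : ι) : Finset ι :=
  if Odd S.card then S else if i₀ ∈ S then S.erase i₀ else insert i₀ S

variable {N S W : Finset ι} {c : ι → ℝ} {i₀ : ι}

theorem odd_card_makeOdd : Odd (makeOdd S i₀).card := by
  unfold makeOdd
  split_ifs with hodd hmem
  · exact hodd
  · rw [card_erase_of_mem hmem]
    have : 0 < S.card := card_pos.mpr ⟨i₀, hmem⟩
    rw [Nat.odd_iff] at hodd ⊢
    omega
  · rw [card_insert_of_notMem hmem]
    rw [Nat.odd_iff] at hodd ⊢
    omega

theorem makeOdd_subset (hSN : S ⊆ N) (hi₀ : i₀ ∈ N) : makeOdd S i₀ ⊆ N := by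
  unfold makeOdd
  split_ifs
  · exact hSN
  · exact (erase_subset _ _).trans hSN
  · exact insert_subset hi₀ hSN

theorem sum_makeOdd_of_not_odd (heven : ¬Odd S.card) (hneg : ∀ i ∈ S, c i ≤ 0)
    (hpos : i₀ ∉ S → 0 ≤ c i₀) :
    ∑ i ∈ makeOdd S i₀, c i = ∑ i ∈ S, c i + |c i₀| := by
  rw [makeOdd, if_neg heven]
  split_ifs with hmem
  · rw [sum_erase_eq_sub hmem, abs_of_nonpos (hneg i₀ hmem)]
    ring
  · rw [sum_insert hmem, abs_of_nonneg (hpos hmem)]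
    ring

theorem sum_eq_sum_add_sum_abs_symmDiff (hneg : ∀ i ∈ S, c i ≤ 0)
    (hpos : ∀ i ∈ W \ S, 0 ≤ c i) :
    ∑ i ∈ W, c i = ∑ i ∈ S, c i + ∑ i ∈ W ∆ S, |c i| := by
  have hWS : ∑ i ∈ W \ S, |c i| = ∑ i ∈ W \ S, c i :=
    sum_congr rfl fun i hi => abs_of_nonneg (hpos i hi)
  have hSW : ∑ i ∈ S \ W, |c i| = -∑ i ∈ S \ W, c i := by
    rw [← sum_neg_distrib]
    exact sum_congr rfl fun i hi => abs_of_nonpos (hneg i (mem_sdiff.mp hi).1)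
  rw [Finset.symmDiff_def, sum_union disjoint_sdiff_sdiff, hWS, hSW]
  linarith [sum_sdiff_sub_sum_sdiff (s₁ := S) (s₂ := W) (f := c)]

theorem abs_le_sum_abs_symmDiff (hWN : W ⊆ N) (hSN : S ⊆ N) (hWS : W ≠ S)
    (hmin : ∀ k ∈ N, |c i₀| ≤ |c k|) :
    |c i₀| ≤ ∑ i ∈ W ∆ S, |c i| := by
  obtain ⟨k, hk⟩ := symmDiff_nonempty.mpr hWS
  calc |c i₀| ≤ |c k| := hmin k (union_subset hWN hSN (symmDiff_subset_union hk))
    _ ≤ ∑ i ∈ W ∆ S, |c i| := single_le_sum (fun i _ => abs_nonneg (c i)) hk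

theorem sum_makeOdd_le (hSN : S ⊆ N) (hneg : ∀ i ∈ S, c i ≤ 0)
    (hpos : ∀ i ∈ N \ S, 0 ≤ c i) (hi₀ : i₀ ∈ N) (hmin : ∀ k ∈ N, |c i₀| ≤ |c k|)
    (hWN : W ⊆ N) (hodd : Odd W.card) :
    ∑ i ∈ makeOdd S i₀, c i ≤ ∑ i ∈ W, c i := by
  rw [sum_eq_sum_add_sum_abs_symmDiff hneg fun i hi => hpos i (sdiff_subset_sdiff hWN le_rfl hi)]
  have hsum_nonneg : 0 ≤ ∑ i ∈ W ∆ S, |c i| := sum_nonneg fun i _ => abs_nonneg (c i)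
  by_cases hS : Odd S.card
  · rw [makeOdd, if_pos hS]
    linarith
  · rw [sum_makeOdd_of_not_odd hS hneg fun h => hpos i₀ (mem_sdiff.mpr ⟨hi₀, h⟩)]
    have hWS : W ≠ S := by
      rintro rfl
      exact hS hodd
    linarith [abs_le_sum_abs_symmDiff hWN hSN hWS hmin]

end OddSubsetMinimization

theorem LHS_eq_sum_add_sum {m n : ℕ} {H : Fin m → Fin n → Bool} {j : Fin m}
    {W : Finset (Fin n)} (u : Fin n → ℝ) (hW : W ⊆ supp H j) :
    LHS H j W u = ∑ i ∈ supp H j, u i + ∑ i ∈ W, (1 - 2 * u i) := by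
  rw [LHS, sum_sdiff_eq_sub hW]
  have : ∑ i ∈ W, (1 - 2 * u i) = ∑ i ∈ W, (1 - u i) - ∑ i ∈ W, u i := by
    rw [← sum_sub_distrib]
    exact sum_congr rfl fun i _ => by ring
  rw [this]
  ring

theorem stmt_6_general (m n : ℕ) (H : Fin m → Fin n → Bool) (j : Fin m)
    (u : Fin n → ℝ)
    (istar : Fin n) (histar : istar ∈ supp H j)
    (hmin : ∀ i ∈ supp H j, |u istar - 1/2| ≤ |u i - 1/2|)
    (S : Finset (Fin n)) (hS : S = (supp H j).filter (fun i => 1/2 < u i))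
    (V : Finset (Fin n))
    (hV : V = if Odd S.card then S
              else (if istar ∈ S then S.erase istar else insert istar S)) :
    Odd V.card ∧
    (∀ V' : Finset (Fin n), V' ⊆ supp H j → Odd V'.card →
      LHS H j V u ≤ LHS H j V' u) ∧
    ((∃ V' : Finset (Fin n), V' ⊆ supp H j ∧ Odd V'.card ∧ LHS H j V' u < 1) ↔
      LHS H j V u < 1) := by
  replace hV : V = makeOdd S istar := hV
  subst hV hS
  have hneg : ∀ i ∈ (supp H j).filter (fun i => 1/2 < u i), 1 - 2 * u i ≤ 0 :=
    fun i hi => by linarith [(mem_filter.mp hi).2]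
  have hpos : ∀ i ∈ supp H j \ (supp H j).filter (fun i => 1/2 < u i), 0 ≤ 1 - 2 * u i :=
    fun i hi => by
      simp only [mem_sdiff, mem_filter, not_and, not_lt] at hi
      linarith [hi.2 hi.1]
  have habs (x : ℝ) : |1 - 2 * x| = 2 * |x - 1/2| := by
    rw [show 1 - 2 * x = -2 * (x - 1/2) by ring, abs_mul]
    norm_num
  have hmin' : ∀ k ∈ supp H j, |1 - 2 * u istar| ≤ |1 - 2 * u k| :=
    fun k hk => by linarith [habs (u istar), habs (u k), hmin k hk]
  have hsub := makeOdd_subset (filter_subset (fun i => 1/2 < u i) (supp H j)) histar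
  have hopt : ∀ V' : Finset (Fin n), V' ⊆ supp H j → Odd V'.card →
      LHS H j (makeOdd _ istar) u ≤ LHS H j V' u := fun V' hV' hodd => by
    rw [LHS_eq_sum_add_sum u hsub, LHS_eq_sum_add_sum u hV']
    linarith [sum_makeOdd_le (filter_subset _ _) hneg hpos histar hmin' hV' hodd]
  exact ⟨odd_card_makeOdd, hopt, fun ⟨V', hV', hodd, hlt⟩ => (hopt V' hV' hodd).trans_lt hlt,
    fun hlt => ⟨_, hsub, odd_card_makeOdd, hlt⟩⟩

/-- correctness of Algorithm 2.  With `S = {i ∈ N(j) : u_i > 1/2}`,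
and `V = S` if `|S|` is odd, otherwise `V` obtained from `S` by adding/removing
an element `i*` of `N(j)` whose value is closest to `1/2`, the set `V` has odd
cardinality and minimizes `LHS_{j,·}(u)` over all odd-cardinality subsets of
`N(j)`; consequently row `j` has a violated parity inequality at `u` iff
`LHS_{j,V}(u) < 1`. -/
theorem stmt_6 (m n : ℕ) (H : Fin m → Fin n → Bool) (j : Fin m)
    (u : Fin n → ℝ) (hu : ∀ i, 0 ≤ u i ∧ u i ≤ 1)
    (hne : (supp H j).Nonempty)
    (istar : Fin n) (histar : istar ∈ supp H j)
    (hmin : ∀ i ∈ supp H j, |u istar - 1/2| ≤ |u i - 1/2|)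
    (S : Finset (Fin n)) (hS : S = (supp H j).filter (fun i => 1/2 < u i))
    (V : Finset (Fin n))
    (hV : V = if Odd S.card then S
              else (if istar ∈ S then S.erase istar else insert istar S)) :
    Odd V.card ∧
    (∀ V' : Finset (Fin n), V' ⊆ supp H j → Odd V'.card →
      LHS H j V u ≤ LHS H j V' u) ∧
    ((∃ V' : Finset (Fin n), V' ⊆ supp H j ∧ Odd V'.card ∧ LHS H j V' u < 1) ↔
      LHS H j V u < 1) :=
  stmt_6_general m n H j u istar histar hmin S hS V hV
end

section
/- Let H ∈ {0,1}^{m×n}, γ ∈ ℝ^n, and let C be a finite set of pairs (j,V) where j is a row index of H and V ⊆ N(j) has odd cardinality. Suppose u* ∈ ℝ^n is the unique minimizer of γᵀu over the set of u ∈ ℝ^n satisfying the initial box constraints determined by γ together with the parity inequality associated with (j,V) for every (j,V) ∈ C. Then 0 ≤ u*_i ≤ 1 for all i = 1,…,n. -/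
/-- The feasible set of an (M)ALP subproblem: initial box constraints
determined by `γ`, together with the parity inequalities of the pairs in `C`. -/
def feasible {m n : ℕ} (H : Fin m → Fin n → Bool) (γ : Fin n → ℝ)
    (C : Finset (Fin m × Finset (Fin n))) : Set (Fin n → ℝ) :=
  {u | (∀ i, (0 ≤ γ i → 0 ≤ u i) ∧ (γ i < 0 → u i ≤ 1)) ∧
    ∀ p ∈ C, 1 ≤ LHS H p.1 p.2 u}

/-!
Clamping every coordinate of a feasible point into `[0, 1]` keeps it feasible: a parity
inequality `Σ_V (1 - u_i) + Σ_{N(j) \ V} u_i ≥ 1` either has a term that clamps to `1`, or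
clamping only increases each of its terms. Clamping also cannot increase `γᵀu`: when `γ_i ≥ 0`
the box constraint gives `u_i ≥ 0`, so clamping can only lower `u_i`, and symmetrically when
`γ_i < 0`. Hence the clamped
minimizer is again a minimizer, and by uniqueness it is the minimizer itself.
-/

open Finset

def unitClamp (x : ℝ) : ℝ := max 0 (min 1 x)

lemma unitClamp_nonneg (x : ℝ) : 0 ≤ unitClamp x := le_max_left _ _

lemma unitClamp_le_one (x : ℝ) : unitClamp x ≤ 1 := max_le zero_le_one (min_le_left _ _)

lemma unitClamp_le_self {x : ℝ} (hx : 0 ≤ x) : unitClamp x ≤ x := max_le hx (min_le_right _ _)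

lemma self_le_unitClamp {x : ℝ} (hx : x ≤ 1) : x ≤ unitClamp x := by
  rw [unitClamp, min_eq_right hx]
  exact le_max_right _ _

lemma unitClamp_of_one_le {x : ℝ} (hx : 1 ≤ x) : unitClamp x = 1 := by
  rw [unitClamp, min_eq_left hx, max_eq_right zero_le_one]

lemma one_sub_unitClamp (x : ℝ) : 1 - unitClamp x = unitClamp (1 - x) := by
  unfold unitClamp
  rcases le_total x 0 with h | h <;> rcases le_total x 1 with h' | h' <;>
    simp only [min_def, max_def] <;> split_ifs <;> linarith

lemma one_le_sum_unitClamp {ι : Type*} {s : Finset ι} {a : ι → ℝ}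
    (h : 1 ≤ ∑ i ∈ s, a i) : 1 ≤ ∑ i ∈ s, unitClamp (a i) := by
  by_cases hbig : ∃ i ∈ s, 1 ≤ a i
  · obtain ⟨i, hi, hai⟩ := hbig
    calc (1 : ℝ) = unitClamp (a i) := (unitClamp_of_one_le hai).symm
      _ ≤ ∑ i ∈ s, unitClamp (a i) :=
        single_le_sum (fun i _ => unitClamp_nonneg (a i)) hi
  · push Not at hbig
    exact h.trans (sum_le_sum fun i hi => self_le_unitClamp (hbig i hi).le)

lemma one_le_LHS_unitClamp {m n : ℕ} {H : Fin m → Fin n → Bool} {j : Fin m}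
    {V : Finset (Fin n)} {u : Fin n → ℝ} (h : 1 ≤ LHS H j V u) :
    1 ≤ LHS H j V (fun i => unitClamp (u i)) := by
  have key := one_le_sum_unitClamp (s := V.disjSum (supp H j \ V))
    (a := Sum.elim (fun i => 1 - u i) u) (by rwa [sum_disjSum])
  rw [sum_disjSum] at key
  simpa only [LHS, Sum.elim_inl, Sum.elim_inr, one_sub_unitClamp] using key

lemma unitClamp_mem_feasible {m n : ℕ} {H : Fin m → Fin n → Bool} {γ : Fin n → ℝ}
    {C : Finset (Fin m × Finset (Fin n))} {u : Fin n → ℝ} (hu : u ∈ feasible H γ C) :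
    (fun i => unitClamp (u i)) ∈ feasible H γ C :=
  ⟨fun _ => ⟨fun _ => unitClamp_nonneg _, fun _ => unitClamp_le_one _⟩,
    fun p hp => one_le_LHS_unitClamp (hu.2 p hp)⟩

lemma sum_mul_unitClamp_le {m n : ℕ} {H : Fin m → Fin n → Bool} {γ : Fin n → ℝ}
    {C : Finset (Fin m × Finset (Fin n))} {u : Fin n → ℝ} (hu : u ∈ feasible H γ C) :
    ∑ i, γ i * unitClamp (u i) ≤ ∑ i, γ i * u i := by
  refine sum_le_sum fun i _ => ?_
  rcases le_or_gt 0 (γ i) with hγ | hγ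
  · exact mul_le_mul_of_nonneg_left (unitClamp_le_self ((hu.1 i).1 hγ)) hγ
  · exact mul_le_mul_of_nonpos_left (self_le_unitClamp ((hu.1 i).2 hγ)) hγ.le

theorem stmt_7_general (m n : ℕ) (H : Fin m → Fin n → Bool) (γ : Fin n → ℝ)
    (C : Finset (Fin m × Finset (Fin n)))
    (ustar : Fin n → ℝ) (hfeas : ustar ∈ feasible H γ C)
    (huniq : ∀ v ∈ feasible H γ C, v ≠ ustar →
      ∑ i, γ i * ustar i < ∑ i, γ i * v i) :
    ∀ i, 0 ≤ ustar i ∧ ustar i ≤ 1 := by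
  have hfix : (fun i => unitClamp (ustar i)) = ustar := by
    by_contra hne
    exact (sum_mul_unitClamp_le hfeas).not_gt (huniq _ (unitClamp_mem_feasible hfeas) hne)
  intro i
  rw [← congrFun hfix i]
  exact ⟨unitClamp_nonneg _, unitClamp_le_one _⟩

/-- the unique minimizer of `γᵀu` over the feasible set of an
(M)ALP subproblem satisfies all the box constraints `0 ≤ u_i ≤ 1`. -/
theorem stmt_7 (m n : ℕ) (H : Fin m → Fin n → Bool) (γ : Fin n → ℝ)
    (C : Finset (Fin m × Finset (Fin n)))
    (hC : ∀ p ∈ C, p.2 ⊆ supp H p.1 ∧ Odd p.2.card)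
    (ustar : Fin n → ℝ) (hfeas : ustar ∈ feasible H γ C)
    (huniq : ∀ v ∈ feasible H γ C, v ≠ ustar →
      ∑ i, γ i * ustar i < ∑ i, γ i * v i) :
    ∀ i, 0 ≤ ustar i ∧ ustar i ≤ 1 :=
  stmt_7_general m n H γ C ustar hfeas huniq
end

section
/- Let I be a finite index set with a_i ∈ ℝ^n and b_i ∈ ℝ for each i ∈ I, let c ∈ ℝ^n, and suppose u* is the unique minimizer of cᵀu over P = {u : a_iᵀu ≤ b_i, i ∈ I}. Let J = {i ∈ I : a_iᵀu* = b_i} be the active set at u*. Let K be a finite family of additional constraints a_kᵀu ≤ b_k, at least one of which is violated at u* (i.e., a_kᵀu* > b_k for some k ∈ K). If u' is any minimizer of cᵀu over P' = {u : a_iᵀu ≤ b_i for all i ∈ J ∪ K}, then cᵀu' > cᵀu*. -/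
/-!
If `c ⬝ᵥ u' ≤ c ⬝ᵥ u*`, walk from `u*` towards `u'`. Constraints active at `u*` are satisfied
at both ends, hence along the whole ray; inactive ones have slack, so they survive a short
step. A short step therefore stays in `P`, costs no more than `u*` and differs from `u*`
(the violated new constraint forces `u' ≠ u*`), contradicting uniqueness of the minimizer.
-/

open Filter Topology

def polyhedron {m ι : Type*} [Fintype m] (a : ι → m → ℝ) (b : ι → ℝ) : Set (m → ℝ) :=
  {u | ∀ i, a i ⬝ᵥ u ≤ b i}

section

variable {m ι : Type*} [Fintype m] [Finite ι] {a : ι → m → ℝ} {b : ι → ℝ} {x y : m → ℝ}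

lemma dotProduct_lineMap (w x y : m → ℝ) (t : ℝ) :
    w ⬝ᵥ AffineMap.lineMap x y t = (1 - t) * w ⬝ᵥ x + t * w ⬝ᵥ y := by
  simp only [AffineMap.lineMap_apply_module, dotProduct_add, dotProduct_smul, smul_eq_mul]

lemma eventually_lineMap_mem_polyhedron (hx : x ∈ polyhedron a b)
    (hy : ∀ i, a i ⬝ᵥ x = b i → a i ⬝ᵥ y ≤ b i) :
    ∀ᶠ t in 𝓝[>] (0 : ℝ), AffineMap.lineMap x y t ∈ polyhedron a b := by
  refine eventually_all.2 fun i => ?_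
  rcases (hx i).eq_or_lt with hactive | hinactive
  · filter_upwards [self_mem_nhdsWithin] with t (ht : 0 < t)
    rw [dotProduct_lineMap]
    nlinarith [hy i hactive]
  · have hcont : Continuous fun t : ℝ => a i ⬝ᵥ AffineMap.lineMap x y t := by
      simp only [dotProduct_lineMap]; fun_prop
    have h0 : a i ⬝ᵥ AffineMap.lineMap x y (0 : ℝ) < b i := by simpa using hinactive
    exact nhdsWithin_le_nhds <| (hcont.continuousAt.eventually_lt continuousAt_const h0).mono
      fun t ht => ht.le

theorem dotProduct_lt_of_satisfies_active_constraints {c : m → ℝ} (hx : x ∈ polyhedron a b)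
    (huniq : ∀ v ∈ polyhedron a b, v ≠ x → c ⬝ᵥ x < c ⬝ᵥ v)
    (hy : ∀ i, a i ⬝ᵥ x = b i → a i ⬝ᵥ y ≤ b i) (hyx : y ≠ x) :
    c ⬝ᵥ x < c ⬝ᵥ y := by
  by_contra! hcost
  obtain ⟨t, ht, htpos⟩ :=
    ((eventually_lineMap_mem_polyhedron hx hy).and self_mem_nhdsWithin).exists
  have hne : AffineMap.lineMap x y t ≠ x := by
    rw [Ne, AffineMap.lineMap_eq_left_iff]
    exact not_or.2 ⟨hyx.symm, htpos.ne'⟩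
  have := huniq _ ht hne
  rw [dotProduct_lineMap] at this
  nlinarith

end

theorem stmt_10_general (n : ℕ) (ι : Type) [Fintype ι]
    (a : ι → Fin n → ℝ) (b : ι → ℝ) (c : Fin n → ℝ)
    (P : Set (Fin n → ℝ)) (hP : P = {u | ∀ i, ∑ k, a i k * u k ≤ b i})
    (ustar : Fin n → ℝ) (hmem : ustar ∈ P)
    (huniq : ∀ v ∈ P, v ≠ ustar → ∑ k, c k * ustar k < ∑ k, c k * v k)
    (J : Set ι) (hJ : J = {i | ∑ k, a i k * ustar k = b i})
    (κ : Type) (a' : κ → Fin n → ℝ) (b' : κ → ℝ)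
    (hviol : ∃ k : κ, b' k < ∑ i, a' k i * ustar i)
    (P' : Set (Fin n → ℝ))
    (hP' : P' = {u | (∀ i ∈ J, ∑ k, a i k * u k ≤ b i) ∧
      ∀ k : κ, ∑ i, a' k i * u i ≤ b' k})
    (u' : Fin n → ℝ) (hu'mem : u' ∈ P') :
    ∑ k, c k * ustar k < ∑ k, c k * u' k := by
  subst hP hJ hP'
  obtain ⟨hactive, hnew⟩ := hu'mem
  obtain ⟨k, hk⟩ := hviol
  have hne : u' ≠ ustar := by
    rintro rfl
    exact (hnew k).not_gt hk
  exact dotProduct_lt_of_satisfies_active_constraints (a := a) hmem huniq hactive hne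

/-- let `u*` be the unique minimizer of a linear cost over a
polyhedron `P`, let `J` be the active set at `u*`, and add a finite family `K`
of new constraints, at least one of which is violated at `u*`.  Then any
minimizer `u'` of the cost over the polyhedron `P'` described by the
constraints in `J` together with those in `K` has strictly larger cost than
`u*`. -/
theorem stmt_10 (n : ℕ) (ι : Type) [Fintype ι]
    (a : ι → Fin n → ℝ) (b : ι → ℝ) (c : Fin n → ℝ)
    (P : Set (Fin n → ℝ)) (hP : P = {u | ∀ i, ∑ k, a i k * u k ≤ b i})
    (ustar : Fin n → ℝ) (hmem : ustar ∈ P)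
    (huniq : ∀ v ∈ P, v ≠ ustar → ∑ k, c k * ustar k < ∑ k, c k * v k)
    (J : Set ι) (hJ : J = {i | ∑ k, a i k * ustar k = b i})
    (κ : Type) [Fintype κ] (a' : κ → Fin n → ℝ) (b' : κ → ℝ)
    (hviol : ∃ k : κ, b' k < ∑ i, a' k i * ustar i)
    (P' : Set (Fin n → ℝ))
    (hP' : P' = {u | (∀ i ∈ J, ∑ k, a i k * u k ≤ b i) ∧
      ∀ k : κ, ∑ i, a' k i * u i ≤ b' k})
    (u' : Fin n → ℝ) (hu'mem : u' ∈ P')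
    (hu'min : ∀ v ∈ P', ∑ k, c k * u' k ≤ ∑ k, c k * v k) :
    ∑ k, c k * ustar k < ∑ k, c k * u' k :=
  stmt_10_general n ι a b c P hP ustar hmem huniq J hJ κ a' b' hviol P' hP' u' hu'mem
end

section
/- Let H ∈ {0,1}^{m×n} and γ ∈ ℝ^n with γ_i ≠ 0 for all i, and suppose u* is the unique minimizer of γᵀu over the fundamental polytope P(H). Then u* agrees with the hard-decision vector ũ in at least n − m coordinates; equivalently, u* differs from the vector obtained by bit-based hard decisions on γ in at most m coordinates. -/
/-- The fundamental polytope `P(H)`. -/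
def fundamentalPolytope {m n : ℕ} (H : Fin m → Fin n → Bool) : Set (Fin n → ℝ) :=
  {u | (∀ i, 0 ≤ u i ∧ u i ≤ 1) ∧
    ∀ j, ∀ V : Finset (Fin n), V ⊆ supp H j → Odd V.card → 1 ≤ LHS H j V u}

/-- The hard-decision vector of an LLR vector `γ` with nonzero entries:
`ũ_i = 0` if `γ_i > 0` and `ũ_i = 1` if `γ_i < 0`. -/
noncomputable def hardDecision {n : ℕ} (γ : Fin n → ℝ) : Fin n → ℝ :=
  fun i => if 0 < γ i then 0 else 1

open Finset Filter Topology

/-!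
A direction that keeps all tight constraints of the fundamental polytope can be followed for a
short time, so at the unique minimizer `u` no nonzero direction can be followed both ways, and
no direction decreasing `γᵀu` can be followed at all. Split the coordinates where `u` differs
from the hard decision into integral and fractional ones.

If `W` is a nonempty set of integral disagreements, flipping the bits of `W` decreases `γᵀu`,
so it violates some tight parity inequality. That inequality has weight `1` at exactly one
coordinate of `W` and weight `0` at every other coordinate of its row, so its row meets `W` in
one point and has no fractional coordinate. Peeling off that point and repeating yields as
many distinct rows without fractional coordinates as there are integral disagreements.

Two distinct tight inequalities of one row agree, up to sign, on the fractional coordinates.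
Hence a direction supported on the fractional coordinates keeps every tight constraint as soon
as it keeps one chosen tight inequality per row meeting the fractional coordinates; such a
direction must vanish, so the fractional coordinates are at most as many as those rows.
-/

namespace FundamentalPolytope

lemma eventually_le_add_mul {a b c : ℝ} (hca : c ≤ a) (hb : a = c → 0 ≤ b) :
    ∀ᶠ ε in 𝓝[>] (0 : ℝ), c ≤ a + ε * b := by
  rcases hca.eq_or_lt with rfl | hlt
  · filter_upwards [self_mem_nhdsWithin] with ε (hε : 0 < ε)
    nlinarith [hb rfl]
  · have hlim : Tendsto (fun ε : ℝ => a + ε * b) (𝓝[>] 0) (𝓝 a) := by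
      have : Continuous fun ε : ℝ => a + ε * b := by fun_prop
      simpa using (this.tendsto 0).mono_left nhdsWithin_le_nhds
    exact hlim.eventually (eventually_ge_nhds hlt)

lemma dotProduct_pos_of_eventually_add_smul_mem {ι : Type*} [Fintype ι] {S : Set (ι → ℝ)}
    {γ u d : ι → ℝ} (huniq : ∀ v ∈ S, v ≠ u → γ ⬝ᵥ u < γ ⬝ᵥ v) (hd : d ≠ 0)
    (hS : ∀ᶠ ε in 𝓝[>] (0 : ℝ), u + ε • d ∈ S) : 0 < γ ⬝ᵥ d := by
  obtain ⟨ε, hεS, hε⟩ := (hS.and self_mem_nhdsWithin).exists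
  have hne : u + ε • d ≠ u := by simpa [(hε : 0 < ε).ne'] using hd
  have hlt := huniq _ hεS hne
  rw [dotProduct_add, dotProduct_smul, smul_eq_mul] at hlt
  exact pos_of_mul_pos_right (by linarith) hε.le

-- Peeling: a row meeting `W` in exactly `{a}` misses `W.erase a`, so it differs from the
-- rows found for `W.erase a`.
theorem exists_card_eq_of_forall_card_inter_eq_one {α β : Type*} [DecidableEq α]
    [DecidableEq β] (R : β → Finset α) (P : β → Prop) (S : Finset α)
    (h : ∀ W ⊆ S, W.Nonempty → ∃ b, P b ∧ #(W ∩ R b) = 1) :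
    ∃ B : Finset β, #B = #S ∧ ∀ b ∈ B, P b := by
  suffices key : ∀ W ⊆ S, ∃ B : Finset β, #B = #W ∧ ∀ b ∈ B, P b ∧ (W ∩ R b).Nonempty by
    obtain ⟨B, hB, hBP⟩ := key S Subset.rfl
    exact ⟨B, hB, fun b hb => (hBP b hb).1⟩
  intro W
  induction W using Finset.strongInduction with
  | H W ih =>
    intro hWS
    rcases W.eq_empty_or_nonempty with rfl | hW
    · exact ⟨∅, rfl, by simp⟩
    obtain ⟨b, hPb, hb⟩ := h W hWS hW
    obtain ⟨a, ha⟩ := card_eq_one.1 hb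
    have haW : a ∈ W := (mem_inter.1 (ha ▸ mem_singleton_self a)).1
    obtain ⟨B, hB, hBP⟩ := ih (W.erase a) (erase_ssubset haW) ((erase_subset a W).trans hWS)
    have hmiss : W.erase a ∩ R b = ∅ := by rw [erase_inter, ha, erase_singleton]
    have hbB : b ∉ B := fun hbB => by simpa [hmiss] using (hBP b hbB).2
    refine ⟨insert b B, ?_, ?_⟩
    · rw [card_insert_of_notMem hbB, hB, card_erase_of_mem haW,
        Nat.sub_add_cancel (card_pos.2 hW)]
    · intro b' hb'
      rcases mem_insert.1 hb' with rfl | hb'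
      · exact ⟨hPb, card_pos.1 (by omega)⟩
      · exact ⟨(hBP b' hb').1, (hBP b' hb').2.mono (inter_subset_inter_right (erase_subset a W))⟩

section ParityInequality

variable {m n : ℕ} (H : Fin m → Fin n → Bool)

def parityDeriv (j : Fin m) (V : Finset (Fin n)) : (Fin n → ℝ) →ₗ[ℝ] ℝ :=
  ∑ i ∈ supp H j \ V, LinearMap.proj i - ∑ i ∈ V, LinearMap.proj i

lemma parityDeriv_apply (j : Fin m) (V : Finset (Fin n)) (d : Fin n → ℝ) :
    parityDeriv H j V d = ∑ i ∈ supp H j \ V, d i - ∑ i ∈ V, d i := by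
  simp [parityDeriv]

lemma LHS_add_smul (j : Fin m) (V : Finset (Fin n)) (u d : Fin n → ℝ) (c : ℝ) :
    LHS H j V (u + c • d) = LHS H j V u + c * parityDeriv H j V d := by
  simp only [LHS, parityDeriv_apply, Pi.add_apply, Pi.smul_apply, smul_eq_mul, mul_sub,
    Finset.mul_sum, Finset.sum_sub_distrib, Finset.sum_add_distrib]
  ring

lemma parityDeriv_eq_sum {j : Fin m} {V : Finset (Fin n)} (hV : V ⊆ supp H j)
    (d : Fin n → ℝ) :
    parityDeriv H j V d = ∑ i ∈ supp H j, if i ∈ V then -d i else d i := by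
  rw [Finset.sum_ite, filter_mem_eq_inter, inter_eq_right.2 hV, ← sdiff_eq_filter,
    sum_neg_distrib, parityDeriv_apply]
  ring

def parityWeight (V : Finset (Fin n)) (u : Fin n → ℝ) (i : Fin n) : ℝ :=
  if i ∈ V then 1 - u i else u i

lemma LHS_eq_sum_parityWeight {j : Fin m} {V : Finset (Fin n)} (hV : V ⊆ supp H j)
    (u : Fin n → ℝ) : LHS H j V u = ∑ i ∈ supp H j, parityWeight V u i := by
  simp only [parityWeight]
  rw [Finset.sum_ite, filter_mem_eq_inter, inter_eq_right.2 hV, ← sdiff_eq_filter]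
  rfl

variable {V : Finset (Fin n)} {u : Fin n → ℝ} {i : Fin n}

lemma parityWeight_nonneg (hu : ∀ i, 0 ≤ u i ∧ u i ≤ 1) (i : Fin n) :
    0 ≤ parityWeight V u i := by
  unfold parityWeight
  split_ifs
  · linarith [(hu i).2]
  · exact (hu i).1

lemma parityWeight_eq_zero_or_one_iff :
    parityWeight V u i = 0 ∨ parityWeight V u i = 1 ↔ u i = 0 ∨ u i = 1 := by
  unfold parityWeight
  split_ifs <;> constructor <;> rintro (h | h) <;> first | (left; linarith) | (right; linarith)

def IsTight (u : Fin n → ℝ) (j : Fin m) (V : Finset (Fin n)) : Prop :=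
  V ⊆ supp H j ∧ Odd V.card ∧ LHS H j V u = 1

end ParityInequality

section TightConstraints

variable {m n : ℕ} {H : Fin m → Fin n → Bool} {u : Fin n → ℝ} {j : Fin m}
  {V V' : Finset (Fin n)}

lemma parityWeight_eq_zero_of_isTight (hu : ∀ i, 0 ≤ u i ∧ u i ≤ 1) (hT : IsTight H u j V)
    {i₀ i : Fin n} (hi₀ : i₀ ∈ supp H j) (hw : parityWeight V u i₀ = 1) (hi : i ∈ supp H j)
    (hne : i ≠ i₀) : parityWeight V u i = 0 := by
  have hrest : ∑ k ∈ (supp H j).erase i₀, parityWeight V u k = 0 := by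
    have := add_sum_erase _ (parityWeight V u) hi₀
    rw [← LHS_eq_sum_parityWeight H hT.1, hT.2.2, hw] at this
    linarith
  exact (sum_eq_zero_iff_of_nonneg fun k _ => parityWeight_nonneg hu k).1 hrest i
    (mem_erase.2 ⟨hne, hi⟩)

-- The weights of two tight constraints of one row sum to `2` and equal `1` on each of the
-- (at least two) coordinates of `V ∆ V'`, so they vanish off `V ∆ V'`.
lemma eq_zero_or_eq_one_of_isTight_of_ne (hu : ∀ i, 0 ≤ u i ∧ u i ≤ 1)
    (hT : IsTight H u j V) (hT' : IsTight H u j V') (hne : V ≠ V') {i : Fin n}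
    (hi : i ∈ supp H j) (hiV : i ∈ V ↔ i ∈ V') : u i = 0 ∨ u i = 1 := by
  set g : Fin n → ℝ := fun k => parityWeight V u k + parityWeight V' u k
  have hg : ∀ k, 0 ≤ g k := fun k =>
    add_nonneg (parityWeight_nonneg hu k) (parityWeight_nonneg hu k)
  set Δ := V \ V' ∪ V' \ V
  have hΔ : Δ ⊆ supp H j := union_subset (sdiff_subset.trans hT.1) (sdiff_subset.trans hT'.1)
  have hcardΔ : 2 ≤ #Δ := by
    have hpos : #Δ ≠ 0 := by
      rw [Ne, card_eq_zero, union_eq_empty, sdiff_eq_empty_iff_subset,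
        sdiff_eq_empty_iff_subset]
      exact fun h => hne (h.1.antisymm h.2)
    have hΔ' : #Δ = #(V \ V') + #(V' \ V) := card_union_of_disjoint disjoint_sdiff_sdiff
    have hcardV := card_sdiff_add_card_inter V V'
    have hcardV' := card_sdiff_add_card_inter V' V
    rw [inter_comm] at hcardV'
    obtain ⟨a, ha⟩ := hT.2.1
    obtain ⟨b, hb⟩ := hT'.2.1
    omega
  have hsumΔ : ∑ k ∈ Δ, g k = #Δ := by
    rw [← nsmul_one, ← sum_const]
    refine sum_congr rfl fun k hk => ?_
    rcases mem_union.1 hk with hk | hk <;> obtain ⟨hk, hk'⟩ := mem_sdiff.1 hk <;>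
      simp [g, parityWeight, hk, hk']
  have hsum : ∑ k ∈ supp H j, g k = 2 := by
    rw [sum_add_distrib, ← LHS_eq_sum_parityWeight H hT.1, ← LHS_eq_sum_parityWeight H hT'.1,
      hT.2.2, hT'.2.2]
    norm_num
  have hrest : ∑ k ∈ supp H j \ Δ, g k = 0 := by
    have := sum_sdiff hΔ (f := g)
    have : (2 : ℝ) ≤ #Δ := by exact_mod_cast hcardΔ
    linarith [sum_nonneg fun k (_ : k ∈ supp H j \ Δ) => hg k]
  have hiΔ : i ∉ Δ := by simp [Δ, hiV]
  have hgi := (sum_eq_zero_iff_of_nonneg fun k _ => hg k).1 hrest i (mem_sdiff.2 ⟨hi, hiΔ⟩)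
  have hw : parityWeight V u i = 0 := by
    linarith [parityWeight_nonneg (V := V) hu i, parityWeight_nonneg (V := V') hu i]
  exact parityWeight_eq_zero_or_one_iff.1 (Or.inl hw)

lemma parityDeriv_add_eq_zero_of_isTight (hu : ∀ i, 0 ≤ u i ∧ u i ≤ 1)
    (hT : IsTight H u j V) (hT' : IsTight H u j V') (hne : V ≠ V') {d : Fin n → ℝ}
    (hd : ∀ i, u i = 0 ∨ u i = 1 → d i = 0) :
    parityDeriv H j V d + parityDeriv H j V' d = 0 := by
  rw [parityDeriv_eq_sum H hT.1, parityDeriv_eq_sum H hT'.1, ← sum_add_distrib]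
  refine sum_eq_zero fun i hi => ?_
  by_cases hiV : i ∈ V ↔ i ∈ V'
  · simp [hd i (eq_zero_or_eq_one_of_isTight_of_ne hu hT hT' hne hi hiV)]
  · by_cases h : i ∈ V <;> simp_all

lemma parityDeriv_eq_zero_of_forall_mem_supp (hV : V ⊆ supp H j) {d : Fin n → ℝ}
    (hd : ∀ i ∈ supp H j, d i = 0) : parityDeriv H j V d = 0 := by
  rw [parityDeriv_eq_sum H hV]
  exact sum_eq_zero fun i hi => by simp [hd i hi]

end TightConstraints

section Minimizer

variable {m n : ℕ} {H : Fin m → Fin n → Bool} {u γ : Fin n → ℝ}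

lemma eventually_add_smul_mem (hu : u ∈ fundamentalPolytope H) {d : Fin n → ℝ}
    (hd₀ : ∀ i, u i = 0 → 0 ≤ d i) (hd₁ : ∀ i, u i = 1 → d i ≤ 0)
    (hdT : ∀ j V, IsTight H u j V → 0 ≤ parityDeriv H j V d) :
    ∀ᶠ ε in 𝓝[>] (0 : ℝ), u + ε • d ∈ fundamentalPolytope H := by
  have hbox : ∀ i, ∀ᶠ ε in 𝓝[>] (0 : ℝ), 0 ≤ (u + ε • d) i ∧ (u + ε • d) i ≤ 1 := by
    intro i
    have hlo := eventually_le_add_mul (hu.1 i).1 (hd₀ i)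
    have hhi := eventually_le_add_mul (sub_nonneg.2 (hu.1 i).2)
      (b := -d i) fun h => neg_nonneg.2 (hd₁ i (by linarith))
    filter_upwards [hlo, hhi] with ε hlo hhi
    simp only [Pi.add_apply, Pi.smul_apply, smul_eq_mul]
    constructor <;> linarith
  have hpar : ∀ j V, V ⊆ supp H j → Odd #V →
      ∀ᶠ ε in 𝓝[>] (0 : ℝ), 1 ≤ LHS H j V (u + ε • d) := by
    intro j V hV hodd
    simp only [LHS_add_smul]
    exact eventually_le_add_mul (hu.2 j V hV hodd) fun h => hdT j V ⟨hV, hodd, h⟩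
  simp only [← eventually_imp_distrib_left] at hpar
  filter_upwards [eventually_all.2 hbox,
    eventually_all.2 fun j => eventually_all.2 (hpar j)] with ε hbox hpar
  exact ⟨hbox, hpar⟩

lemma eq_zero_of_forall_isTight_parityDeriv_eq_zero
    (hu : u ∈ fundamentalPolytope H)
    (huniq : ∀ v ∈ fundamentalPolytope H, v ≠ u → γ ⬝ᵥ u < γ ⬝ᵥ v) {d : Fin n → ℝ}
    (hd : ∀ i, u i = 0 ∨ u i = 1 → d i = 0)
    (hdT : ∀ j V, IsTight H u j V → parityDeriv H j V d = 0) : d = 0 := by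
  by_contra hne
  have hpos := dotProduct_pos_of_eventually_add_smul_mem huniq hne <|
    eventually_add_smul_mem hu (fun i h => (hd i (.inl h)).ge) (fun i h => (hd i (.inr h)).le)
      fun j V hT => (hdT j V hT).ge
  have hneg := dotProduct_pos_of_eventually_add_smul_mem huniq (neg_ne_zero.2 hne) <|
    eventually_add_smul_mem hu (fun i h => by simp [hd i (.inl h)])
      (fun i h => by simp [hd i (.inr h)]) fun j V hT => by simp [hdT j V hT]
  rw [dotProduct_neg] at hneg
  linarith

-- For `u` integral on `W`, `u + flipDir W u` is `u` with its coordinates in `W` flipped.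
def flipDir (W : Finset (Fin n)) (u : Fin n → ℝ) : Fin n → ℝ :=
  fun i => if i ∈ W then 1 - 2 * u i else 0

lemma parityDeriv_flipDir {j : Fin m} {V : Finset (Fin n)} (hV : V ⊆ supp H j)
    (W : Finset (Fin n)) :
    parityDeriv H j V (flipDir W u) = ∑ i ∈ supp H j ∩ W, (1 - 2 * parityWeight V u i) := by
  rw [parityDeriv_eq_sum H hV, ← sum_subset inter_subset_left fun i _ hi => ?_]
  · refine sum_congr rfl fun i hi => ?_
    by_cases hiV : i ∈ V
    · simp [flipDir, parityWeight, (mem_inter.1 hi).2, hiV]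
      ring
    · simp [flipDir, parityWeight, (mem_inter.1 hi).2, hiV]
  · have hiW : i ∉ W := fun h => hi (mem_inter.2 ⟨‹_›, h⟩)
    simp [flipDir, hiW]

lemma exists_isTight_parityDeriv_flipDir_neg (hu : u ∈ fundamentalPolytope H)
    (huniq : ∀ v ∈ fundamentalPolytope H, v ≠ u → γ ⬝ᵥ u < γ ⬝ᵥ v) {W : Finset (Fin n)}
    (hW : W.Nonempty) (hWu : ∀ i ∈ W, u i = 0 ∨ u i = 1)
    (hγW : ∀ i ∈ W, γ i * (1 - 2 * u i) < 0) :
    ∃ j V, IsTight H u j V ∧ parityDeriv H j V (flipDir W u) < 0 := by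
  by_contra! hT
  obtain ⟨i₁, hi₁⟩ := hW
  have hne : flipDir W u ≠ 0 := fun h => by
    have := congrFun h i₁
    rcases hWu i₁ hi₁ with h | h <;> norm_num [flipDir, hi₁, h] at this
  have hpos := dotProduct_pos_of_eventually_add_smul_mem huniq hne <|
    eventually_add_smul_mem hu
      (fun i h => by by_cases hi : i ∈ W <;> simp [flipDir, hi, h])
      (fun i h => by by_cases hi : i ∈ W <;> norm_num [flipDir, hi, h]) hT
  have hneg : γ ⬝ᵥ flipDir W u < 0 := by
    rw [dotProduct, ← sum_subset (subset_univ W) fun i _ hi => by simp [flipDir, hi]]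
    calc ∑ i ∈ W, γ i * flipDir W u i = ∑ i ∈ W, γ i * (1 - 2 * u i) :=
          sum_congr rfl fun i hi => by simp [flipDir, hi]
      _ < 0 := sum_neg hγW ⟨i₁, hi₁⟩
  linarith

lemma card_supp_inter_eq_one_of_parityDeriv_flipDir_neg (hu : ∀ i, 0 ≤ u i ∧ u i ≤ 1)
    {j : Fin m} {V W : Finset (Fin n)} (hT : IsTight H u j V)
    (hWu : ∀ i ∈ W, u i = 0 ∨ u i = 1) (hneg : parityDeriv H j V (flipDir W u) < 0) :
    #(W ∩ supp H j) = 1 ∧ ∀ k ∈ supp H j, u k = 0 ∨ u k = 1 := by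
  rw [parityDeriv_flipDir hT.1, sum_sub_distrib, sum_const, nsmul_one, ← mul_sum] at hneg
  have hle : ∑ i ∈ supp H j ∩ W, parityWeight V u i ≤ 1 := by
    rw [← hT.2.2, LHS_eq_sum_parityWeight H hT.1]
    exact sum_le_sum_of_subset_of_nonneg inter_subset_left fun i _ _ => parityWeight_nonneg hu i
  obtain ⟨i₀, hs⟩ : ∃ i₀, supp H j ∩ W = {i₀} := by
    refine card_eq_one.1 (le_antisymm ?_ (card_pos.2 (nonempty_iff_ne_empty.2 fun h => ?_)))
    · have : ((#(supp H j ∩ W) : ℕ) : ℝ) < 2 := by linarith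
      exact_mod_cast Nat.lt_succ_iff.1 (by exact_mod_cast this)
    · simp [h] at hneg
  have hi₀ : i₀ ∈ supp H j ∩ W := hs ▸ mem_singleton_self i₀
  have hw : parityWeight V u i₀ = 1 := by
    simp only [hs, sum_singleton, card_singleton] at hneg
    rcases parityWeight_eq_zero_or_one_iff.2 (hWu i₀ (mem_inter.1 hi₀).2) with h | h
    · rw [h] at hneg; norm_num at hneg
    · exact h
  refine ⟨by rw [inter_comm, hs, card_singleton], fun k hk => ?_⟩
  rcases eq_or_ne k i₀ with rfl | hne
  · exact hWu k (mem_inter.1 hi₀).2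
  · exact parityWeight_eq_zero_or_one_iff.1
      (.inl (parityWeight_eq_zero_of_isTight hu hT (mem_inter.1 hi₀).1 hw hk hne))

lemma mul_one_sub_two_mul_neg_of_ne_hardDecision {i : Fin n} (hγ : γ i ≠ 0)
    (hu : u i = 0 ∨ u i = 1) (hne : u i ≠ hardDecision γ i) : γ i * (1 - 2 * u i) < 0 := by
  unfold hardDecision at hne
  rcases hu with h | h <;> rw [h] at hne ⊢ <;> split_ifs at hne with hγpos
  · exact absurd rfl hne
  · linarith [lt_of_le_of_ne (not_lt.1 hγpos) hγ]
  · linarith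
  · exact absurd rfl hne

lemma card_integral_ne_hardDecision_le (hγ : ∀ i, γ i ≠ 0) (hu : u ∈ fundamentalPolytope H)
    (huniq : ∀ v ∈ fundamentalPolytope H, v ≠ u → γ ⬝ᵥ u < γ ⬝ᵥ v) :
    #{i | u i ≠ hardDecision γ i ∧ (u i = 0 ∨ u i = 1)} ≤
      #{j | ∀ k ∈ supp H j, u k = 0 ∨ u k = 1} := by
  obtain ⟨B, hB, hBint⟩ := exists_card_eq_of_forall_card_inter_eq_one (supp H)
    (fun j => ∀ k ∈ supp H j, u k = 0 ∨ u k = 1)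
    {i | u i ≠ hardDecision γ i ∧ (u i = 0 ∨ u i = 1)} fun W hW hWne => by
      have hWu : ∀ i ∈ W, u i ≠ hardDecision γ i ∧ (u i = 0 ∨ u i = 1) :=
        fun i hi => (mem_filter.1 (hW hi)).2
      obtain ⟨j, V, hT, hneg⟩ := exists_isTight_parityDeriv_flipDir_neg hu huniq hWne
        (fun i hi => (hWu i hi).2)
        fun i hi => mul_one_sub_two_mul_neg_of_ne_hardDecision (hγ i) (hWu i hi).2 (hWu i hi).1
      obtain ⟨hcard, hj⟩ := card_supp_inter_eq_one_of_parityDeriv_flipDir_neg hu.1 hT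
        (fun i hi => (hWu i hi).2) hneg
      exact ⟨j, hj, hcard⟩
  rw [← hB]
  exact card_le_card fun j hj => mem_filter.2 ⟨mem_univ j, hBint j hj⟩

lemma card_fractional_le (hu : u ∈ fundamentalPolytope H)
    (huniq : ∀ v ∈ fundamentalPolytope H, v ≠ u → γ ⬝ᵥ u < γ ⬝ᵥ v) :
    #{i | ¬(u i = 0 ∨ u i = 1)} ≤ #{j | ¬∀ k ∈ supp H j, u k = 0 ∨ u k = 1} := by
  let tightAt (j : Fin m) : Finset (Fin n) := Classical.epsilon (IsTight H u j)
  let Φ : (Fin n → ℝ) →ₗ[ℝ]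
      ({j // ¬∀ k ∈ supp H j, u k = 0 ∨ u k = 1} → ℝ) × ({i // u i = 0 ∨ u i = 1} → ℝ) :=
    (LinearMap.pi fun j => parityDeriv H j.1 (tightAt j.1)).prod
      (LinearMap.pi fun i => LinearMap.proj i.1)
  have hΦ : Function.Injective Φ := by
    refine (injective_iff_map_eq_zero Φ).2 fun d hd => ?_
    have hdInt : ∀ i, u i = 0 ∨ u i = 1 → d i = 0 := fun i hi =>
      congrFun (congrArg Prod.snd hd) ⟨i, hi⟩
    have hdFrac : ∀ j, ¬(∀ k ∈ supp H j, u k = 0 ∨ u k = 1) →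
        parityDeriv H j (tightAt j) d = 0 := fun j hj =>
      congrFun (congrArg Prod.fst hd) ⟨j, hj⟩
    refine eq_zero_of_forall_isTight_parityDeriv_eq_zero hu huniq hdInt fun j V hT => ?_
    by_cases hj : ∀ k ∈ supp H j, u k = 0 ∨ u k = 1
    · exact parityDeriv_eq_zero_of_forall_mem_supp hT.1 fun k hk => hdInt k (hj k hk)
    rcases eq_or_ne V (tightAt j) with rfl | hne
    · exact hdFrac j hj
    · linarith [parityDeriv_add_eq_zero_of_isTight hu.1 hT (Classical.epsilon_spec ⟨V, hT⟩) hne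
        hdInt, hdFrac j hj]
  have hrank := LinearMap.finrank_le_finrank_of_injective hΦ
  simp only [Module.finrank_prod, Module.finrank_fintype_fun_eq_card, Fintype.card_fin,
    Fintype.card_subtype] at hrank
  have hsplit := (univ : Finset (Fin n)).card_filter_add_card_filter_not
    (fun i => u i = 0 ∨ u i = 1)
  rw [card_univ, Fintype.card_fin] at hsplit
  omega

end Minimizer

end FundamentalPolytope

open FundamentalPolytope in
/-- the unique minimizer of `γᵀu` over the fundamental polytope
differs from the hard-decision vector of `γ` in at most `m` coordinates. -/
theorem stmt_12 (m n : ℕ) (H : Fin m → Fin n → Bool) (γ : Fin n → ℝ)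
    (hγ : ∀ i, γ i ≠ 0)
    (ustar : Fin n → ℝ) (hfeas : ustar ∈ fundamentalPolytope H)
    (huniq : ∀ v ∈ fundamentalPolytope H, v ≠ ustar →
      ∑ i, γ i * ustar i < ∑ i, γ i * v i) :
    (Finset.univ.filter (fun i => ustar i ≠ hardDecision γ i)).card ≤ m := by
  have hint := card_integral_ne_hardDecision_le hγ hfeas huniq
  have hfrac := card_fractional_le hfeas huniq
  have hD := card_filter_add_card_filter_not (s := {i | ustar i ≠ hardDecision γ i})
    (fun i => ustar i = 0 ∨ ustar i = 1)
  have hDfrac : #{i ∈ {i | ustar i ≠ hardDecision γ i} | ¬(ustar i = 0 ∨ ustar i = 1)} ≤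
      #{i | ¬(ustar i = 0 ∨ ustar i = 1)} :=
    card_le_card (filter_subset_filter _ (subset_univ _))
  have hrows := (univ : Finset (Fin m)).card_filter_add_card_filter_not
    (fun j => ∀ k ∈ supp H j, ustar k = 0 ∨ ustar k = 1)
  rw [card_univ, Fintype.card_fin] at hrows
  rw [filter_filter] at hD
  omega
end

section
/- Let H ∈ {0,1}^{m×n} and γ ∈ ℝ^n with γ_i ≠ 0 for all i. Let C be a finite set of pairs (j,V) where j is a row index of H and V ⊆ N(j) has odd cardinality, and suppose u* is the unique minimizer of γᵀu over the set of u satisfying the initial box constraints determined by γ together with the parity inequality associated with (j,V) for every (j,V) ∈ C. Then the number of coordinates i with u*_i ≠ ũ_i is at most the number of elements of C whose parity inequality is active at u*; in particular, it is at most |C|. -/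
open Filter Topology Module

theorem exists_ne_zero_forall_eq_zero_of_card_lt {K E κ : Type*} [Field K] [AddCommGroup E]
    [Module K E] [FiniteDimensional K E] [Fintype κ] (φ : κ → Dual K E)
    (h : Fintype.card κ < finrank K E) : ∃ d : E, d ≠ 0 ∧ ∀ k, φ k d = 0 := by
  have hker : LinearMap.ker (LinearMap.pi φ) ≠ ⊥ :=
    LinearMap.ker_ne_bot_of_finrank_lt (by rwa [finrank_fintype_fun_eq_card])
  obtain ⟨d, hd, hd0⟩ := Submodule.exists_mem_ne_zero_of_ne_bot hker
  exact ⟨d, hd0, fun k => congrFun (LinearMap.mem_ker.mp hd) k⟩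

/-- The coordinates outside `D` are `n - |D|` further linear conditions. -/
theorem exists_ne_zero_supported_forall_eq_zero {K ι κ : Type*} [Field K] [Fintype ι]
    [Fintype κ] (φ : κ → Dual K (ι → K)) (D : Finset ι) (h : Fintype.card κ < D.card) :
    ∃ d : ι → K, d ≠ 0 ∧ (∀ i ∉ D, d i = 0) ∧ ∀ k, φ k d = 0 := by
  classical
  let ψ : κ ⊕ {i // i ∉ D} → Dual K (ι → K) := Sum.elim φ fun i => LinearMap.proj i.1
  have hcard : Fintype.card (κ ⊕ {i // i ∉ D}) < finrank K (ι → K) := by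
    rw [Fintype.card_sum, Fintype.card_subtype_compl, Fintype.card_coe,
      finrank_fintype_fun_eq_card]
    have := D.card_le_univ
    omega
  obtain ⟨d, hd0, hψ⟩ := exists_ne_zero_forall_eq_zero_of_card_lt ψ hcard
  exact ⟨d, hd0, fun i hi => hψ (Sum.inr ⟨i, hi⟩), fun k => hψ (Sum.inl k)⟩

/-- Moving along `±t • d` changes the objective by `±t * φ d`, and both changes would have to be
positive. -/
theorem eq_zero_of_eventually_add_smul_mem {E : Type*} [AddCommGroup E] [Module ℝ E]
    {S : Set E} {u d : E} (φ : E →ₗ[ℝ] ℝ) (hmin : ∀ v ∈ S, v ≠ u → φ u < φ v)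
    (hd : ∀ᶠ t in 𝓝 (0 : ℝ), u + t • d ∈ S) : d = 0 := by
  by_contra hd0
  have hobj : ∀ t : ℝ, t ≠ 0 → u + t • d ∈ S → 0 < t * φ d := by
    intro t ht hS
    have := hmin _ hS (by simpa [smul_eq_zero, ht] using hd0)
    rw [map_add, map_smul, smul_eq_mul] at this
    linarith
  obtain ⟨t₁, ht₁S, ht₁⟩ := (hd.filter_mono nhdsWithin_le_nhds |>.and self_mem_nhdsWithin :
    ∀ᶠ t in 𝓝[>] (0 : ℝ), _ ∧ 0 < t).exists
  obtain ⟨t₂, ht₂S, ht₂⟩ := (hd.filter_mono nhdsWithin_le_nhds |>.and self_mem_nhdsWithin :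
    ∀ᶠ t in 𝓝[<] (0 : ℝ), _ ∧ t < 0).exists
  nlinarith [hobj t₁ ht₁.ne' ht₁S, hobj t₂ ht₂.ne ht₂S]

theorem tendsto_add_mul_nhds_zero (a c : ℝ) :
    Tendsto (fun t : ℝ => a + t * c) (𝓝 0) (𝓝 a) :=
  (continuous_const.add (continuous_id.mul continuous_const)).tendsto' 0 a (by simp)

def parityForm {m n : ℕ} (H : Fin m → Fin n → Bool) (j : Fin m) (V : Finset (Fin n)) :
    Dual ℝ (Fin n → ℝ) :=
  ∑ i ∈ supp H j \ V, LinearMap.proj i - ∑ i ∈ V, LinearMap.proj i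

theorem LHS_add_smul {m n : ℕ} (H : Fin m → Fin n → Bool) (j : Fin m) (V : Finset (Fin n))
    (u d : Fin n → ℝ) (t : ℝ) :
    LHS H j V (u + t • d) = LHS H j V u + t * parityForm H j V d := by
  simp only [LHS, parityForm, LinearMap.sub_apply, LinearMap.coe_sum, Finset.sum_apply,
    LinearMap.coe_proj, Function.eval, Pi.add_apply, Pi.smul_apply, smul_eq_mul,
    Finset.sum_sub_distrib, Finset.sum_add_distrib, ← Finset.mul_sum]
  ring

theorem box_slack_of_ne_hardDecision {n : ℕ} {γ u : Fin n → ℝ} {i : Fin n} (hγ : γ i ≠ 0)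
    (hbox : (0 ≤ γ i → 0 ≤ u i) ∧ (γ i < 0 → u i ≤ 1)) (hne : u i ≠ hardDecision γ i) :
    (0 ≤ γ i → 0 < u i) ∧ (γ i < 0 → u i < 1) := by
  unfold hardDecision at hne
  rcases hγ.lt_or_gt with hneg | hpos
  · simp only [not_lt_of_gt hneg, if_false] at hne
    exact ⟨fun h => absurd h (not_le_of_gt hneg), fun h => lt_of_le_of_ne (hbox.2 h) hne⟩
  · simp only [hpos, if_true] at hne
    exact ⟨fun h => lt_of_le_of_ne (hbox.1 h) hne.symm, fun h => absurd h (not_lt_of_gt hpos)⟩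

theorem eventually_add_smul_mem_feasible {m n : ℕ} {H : Fin m → Fin n → Bool}
    {γ : Fin n → ℝ} {C : Finset (Fin m × Finset (Fin n))} {u d : Fin n → ℝ}
    (hu : u ∈ feasible H γ C)
    (hbox : ∀ i, d i ≠ 0 → (0 ≤ γ i → 0 < u i) ∧ (γ i < 0 → u i < 1))
    (hact : ∀ p ∈ C, LHS H p.1 p.2 u = 1 → parityForm H p.1 p.2 d = 0) :
    ∀ᶠ t in 𝓝 (0 : ℝ), u + t • d ∈ feasible H γ C := by
  simp only [feasible, Set.mem_ofPred_eq, eventually_and, eventually_all,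
    LHS_add_smul, Pi.add_apply, Pi.smul_apply, smul_eq_mul]
  refine ⟨fun i => ?_, fun p hp => ?_⟩
  · by_cases hdi : d i = 0
    · simpa [hdi] using hu.1 i
    obtain ⟨hlow, hup⟩ := hbox i hdi
    have hlim := tendsto_add_mul_nhds_zero (u i) (d i)
    exact ⟨fun hγi => (hlim.eventually_const_lt (hlow hγi)).mono fun _ => le_of_lt,
      fun hγi => (hlim.eventually_lt_const (hup hγi)).mono fun _ => le_of_lt⟩
  · rcases (hu.2 p hp).eq_or_lt with hp1 | hp1
    · simp [hact p hp hp1.symm, ← hp1]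
    · exact ((tendsto_add_mul_nhds_zero _ _).eventually_const_lt hp1).mono fun _ => le_of_lt

theorem stmt_17_general (m n : ℕ) (H : Fin m → Fin n → Bool) (γ : Fin n → ℝ)
    (hγ : ∀ i, γ i ≠ 0)
    (C : Finset (Fin m × Finset (Fin n)))
    (ustar : Fin n → ℝ) (hfeas : ustar ∈ feasible H γ C)
    (huniq : ∀ v ∈ feasible H γ C, v ≠ ustar →
      ∑ i, γ i * ustar i < ∑ i, γ i * v i) :
    (Finset.univ.filter (fun i => ustar i ≠ hardDecision γ i)).card ≤
        (C.filter (fun p => LHS H p.1 p.2 ustar = 1)).card ∧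
      (Finset.univ.filter (fun i => ustar i ≠ hardDecision γ i)).card ≤
        C.card := by
  classical
  set D := Finset.univ.filter (fun i => ustar i ≠ hardDecision γ i)
  set A := C.filter (fun p => LHS H p.1 p.2 ustar = 1)
  suffices h : D.card ≤ A.card from ⟨h, h.trans (Finset.card_filter_le _ _)⟩
  by_contra! hlt
  obtain ⟨d, hd0, hdD, hdA⟩ := exists_ne_zero_supported_forall_eq_zero
    (fun p : A => parityForm H p.1.1 p.1.2) D (by simpa using hlt)
  refine hd0 (eq_zero_of_eventually_add_smul_mem (dotProductBilin ℝ ℝ γ) huniq ?_)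
  refine eventually_add_smul_mem_feasible hfeas (fun i hdi => ?_)
    fun p hp hact => hdA ⟨p, Finset.mem_filter.mpr ⟨hp, hact⟩⟩
  have hiD : i ∈ D := by_contra fun hiD => hdi (hdD i hiD)
  exact box_slack_of_ne_hardDecision (hγ i) (hfeas.1 i) (Finset.mem_filter.mp hiD).2

/-- the number of coordinates where the unique minimizer `u*` of
an (M)ALP subproblem differs from the hard-decision vector of `γ` is at most
the number of parity inequalities of the subproblem active at `u*`; in
particular, at most `|C|`. -/
theorem stmt_17 (m n : ℕ) (H : Fin m → Fin n → Bool) (γ : Fin n → ℝ)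
    (hγ : ∀ i, γ i ≠ 0)
    (C : Finset (Fin m × Finset (Fin n)))
    (hC : ∀ p ∈ C, p.2 ⊆ supp H p.1 ∧ Odd p.2.card)
    (ustar : Fin n → ℝ) (hfeas : ustar ∈ feasible H γ C)
    (huniq : ∀ v ∈ feasible H γ C, v ≠ ustar →
      ∑ i, γ i * ustar i < ∑ i, γ i * v i) :
    (Finset.univ.filter (fun i => ustar i ≠ hardDecision γ i)).card ≤
        (C.filter (fun p => LHS H p.1 p.2 ustar = 1)).card ∧
      (Finset.univ.filter (fun i => ustar i ≠ hardDecision γ i)).card ≤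
        C.card :=
  stmt_17_general m n H γ hγ C ustar hfeas huniq
end
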